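/- arXiv:1405.4683 — 5 statements merged into one kernel-verified Lean document; each statement's English description precedes it below -/
import Mathlib

section
/- Let A = Z[x_1,...,x_N]/(x_1^m-1,...,x_N^m-1) and θ = (x_1-1)···(x_N-1). Then the quotient ring A/(θ) is torsion free as a Z-module. -/
/-!
Write `ε_i` for the substitution `X i ↦ 1` and `I` for the ideal generated by the `X i ^ m - 1`.
Each `ε_i` preserves `I` and kills `θ`, so `f ∈ I + (θ)` forces `ε_i f ∈ I` for every `i`.
Conversely this condition characterises `I + (θ)`: split off the factors `X j - 1` of `θ` one at
a time, using `f ≡ ε_j f` modulo `X j - 1`. Hence `c f ∈ I + (θ)` gives `c ε_i f ∈ I` for all `i`,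
and torsion-freeness of `A / (θ)` reduces to that of `A`. The latter holds because reducing every
exponent modulo `m` is a linear map whose kernel is exactly `I`.
-/

open MvPolynomial

namespace MvPolynomial

variable {σ R : Type*} [CommRing R]

section Substitution

variable [DecidableEq σ]

noncomputable def substOne (i : σ) : MvPolynomial σ R →ₐ[R] MvPolynomial σ R :=
  aeval (Function.update X i 1)

theorem substOne_X_self (i : σ) : substOne i (X i : MvPolynomial σ R) = 1 := by
  simp [substOne]

theorem substOne_X_of_ne {i j : σ} (h : j ≠ i) : substOne i (X j : MvPolynomial σ R) = X j := by
  simp [substOne, Function.update_of_ne h]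

theorem X_sub_one_dvd_sub_substOne (i : σ) (f : MvPolynomial σ R) :
    X i - 1 ∣ f - substOne i f := by
  set π := Ideal.Quotient.mkₐ R (Ideal.span {(X i - 1 : MvPolynomial σ R)})
  suffices π.comp (substOne i) = π by
    rw [← Ideal.mem_span_singleton, ← Ideal.Quotient.eq, ← Ideal.Quotient.mkₐ_eq_mk R,
      ← AlgHom.comp_apply, this]
  refine algHom_ext fun j => ?_
  rcases eq_or_ne j i with rfl | h
  · rw [AlgHom.comp_apply, substOne_X_self]
    exact (Ideal.Quotient.eq.mpr (Ideal.mem_span_singleton_self _)).symm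
  · rw [AlgHom.comp_apply, substOne_X_of_ne h]

theorem substOne_prod_X_sub_one {i : σ} {S : Finset σ} (hi : i ∈ S) :
    substOne i (∏ j ∈ S, (X j - 1) : MvPolynomial σ R) = 0 := by
  rw [map_prod]
  exact Finset.prod_eq_zero hi (by simp [substOne_X_self])

theorem substOne_prod_X_sub_one_of_notMem {i : σ} {S : Finset σ} (hi : i ∉ S) :
    substOne i (∏ j ∈ S, (X j - 1) : MvPolynomial σ R) = ∏ j ∈ S, (X j - 1) := by
  rw [map_prod]
  exact Finset.prod_congr rfl fun j hj => by
    simp [substOne_X_of_ne (ne_of_mem_of_not_mem hj hi)]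

theorem mem_sup_span_prod_X_sub_one_iff {I : Ideal (MvPolynomial σ R)}
    (hI : ∀ i, I ≤ I.comap (substOne i)) {S : Finset σ} {f : MvPolynomial σ R} :
    f ∈ I ⊔ Ideal.span {∏ i ∈ S, (X i - 1)} ↔ ∀ i ∈ S, substOne i f ∈ I := by
  refine ⟨fun hf i hi => ?_, fun hf => ?_⟩
  · obtain ⟨u, hu, v, hv, rfl⟩ := Submodule.mem_sup.mp hf
    obtain ⟨g, rfl⟩ := Ideal.mem_span_singleton'.mp hv
    rw [map_add, map_mul, substOne_prod_X_sub_one hi, mul_zero, add_zero]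
    exact hI i hu
  induction S using Finset.induction_on with
  | empty => simp
  | insert j T hj ih =>
    obtain ⟨u, hu, v, hv, rfl⟩ :=
      Submodule.mem_sup.mp (ih fun i hi => hf i (Finset.mem_insert_of_mem hi))
    obtain ⟨g, rfl⟩ := Ideal.mem_span_singleton'.mp hv
    obtain ⟨h, hh⟩ := X_sub_one_dvd_sub_substOne j g
    have hg : substOne j g * ∏ i ∈ T, (X i - 1) ∈ I := by
      have := hf j (Finset.mem_insert_self j T)
      rw [map_add, map_mul, substOne_prod_X_sub_one_of_notMem hj] at this
      exact (Submodule.add_mem_iff_right I (hI j hu)).mp this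
    rw [Finset.prod_insert hj, show g = substOne j g + h * (X j - 1) by linear_combination hh,
      add_mul, ← add_assoc, mul_assoc, mul_comm (X j - 1)]
    exact Submodule.add_mem_sup (I.add_mem hu hg) (Ideal.mem_span_singleton'.mpr ⟨h, rfl⟩)

end Substitution

section PowSubOne

variable (m : ℕ)

variable (σ R) in
noncomputable def powSubOneIdeal : Ideal (MvPolynomial σ R) :=
  Ideal.span (Set.range fun i => X i ^ m - 1)

theorem X_pow_sub_one_mem_powSubOneIdeal (i : σ) :
    (X i ^ m - 1 : MvPolynomial σ R) ∈ powSubOneIdeal σ R m :=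
  Ideal.subset_span ⟨i, rfl⟩

noncomputable def reduceExponents : MvPolynomial σ R →ₗ[R] MvPolynomial σ R :=
  (basisMonomials σ R).constr R fun b => monomial (b.mapRange (· % m) (Nat.zero_mod m)) 1

theorem reduceExponents_monomial (b : σ →₀ ℕ) (c : R) :
    reduceExponents m (monomial b c) = monomial (b.mapRange (· % m) (Nat.zero_mod m)) c := by
  have h := (basisMonomials σ R).constr_basis R
    (fun b => (monomial (b.mapRange (· % m) (Nat.zero_mod m)) 1 : MvPolynomial σ R)) b
  rw [coe_basisMonomials] at h
  rw [← mul_one c, ← smul_eq_mul, ← smul_monomial, ← smul_monomial, map_smul]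
  exact congrArg (c • ·) h

theorem reduceExponents_X_pow_mul (i : σ) (f : MvPolynomial σ R) :
    reduceExponents m (X i ^ m * f) = reduceExponents m f := by
  induction f using MvPolynomial.induction_on' with
  | monomial b c =>
    rw [X_pow_eq_monomial, monomial_mul, one_mul, reduceExponents_monomial,
      reduceExponents_monomial]
    refine congrArg (monomial · c) (Finsupp.ext fun j => ?_)
    rcases eq_or_ne j i with rfl | h
    · simp
    · simp [Finsupp.single_eq_of_ne h]
  | add f g hf hg => rw [mul_add, map_add, map_add, hf, hg]

theorem reduceExponents_eq_zero_of_mem {f : MvPolynomial σ R} (hf : f ∈ powSubOneIdeal σ R m) :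
    reduceExponents m f = 0 := by
  obtain ⟨c, rfl⟩ := Finsupp.mem_ideal_span_range_iff_exists_finsupp.mp hf
  rw [map_finsuppSum]
  exact Finset.sum_eq_zero fun i _ => by
    dsimp only
    rw [mul_sub, mul_one, map_sub, mul_comm, reduceExponents_X_pow_mul, sub_self]

theorem sub_reduceExponents_mem (f : MvPolynomial σ R) :
    f - reduceExponents m f ∈ powSubOneIdeal σ R m := by
  set π := Ideal.Quotient.mkₐ R (powSubOneIdeal σ R m)
  have hX (i : σ) : π (X i) ^ m = 1 := by
    rw [← map_pow, ← sub_eq_zero, ← map_one π, ← map_sub, Ideal.Quotient.mkₐ_eq_mk,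
      Ideal.Quotient.eq_zero_iff_mem]
    exact X_pow_sub_one_mem_powSubOneIdeal m i
  suffices π.toLinearMap ∘ₗ reduceExponents m = π.toLinearMap by
    rw [← Ideal.Quotient.eq, ← Ideal.Quotient.mkₐ_eq_mk R]
    exact (LinearMap.congr_fun this f).symm
  refine linearMap_ext fun b => LinearMap.ext fun c => ?_
  simp only [LinearMap.comp_apply, AlgHom.toLinearMap_apply]
  rw [reduceExponents_monomial, monomial_eq, monomial_eq]
  simp only [map_mul, map_finsuppProd, map_pow]
  rw [Finsupp.prod_mapRange_index fun i => pow_zero _]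
  exact congrArg _ (Finsupp.prod_congr fun i _ => (pow_eq_pow_mod _ (hX i)).symm)

theorem mem_powSubOneIdeal_iff {f : MvPolynomial σ R} :
    f ∈ powSubOneIdeal σ R m ↔ reduceExponents m f = 0 :=
  ⟨reduceExponents_eq_zero_of_mem m, fun h => by simpa [h] using sub_reduceExponents_mem m f⟩

theorem mem_powSubOneIdeal_of_smul_mem [IsDomain R] {c : R} (hc : c ≠ 0)
    {f : MvPolynomial σ R} (h : c • f ∈ powSubOneIdeal σ R m) : f ∈ powSubOneIdeal σ R m := by
  rw [mem_powSubOneIdeal_iff, map_smul, smul_eq_C_mul] at *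
  exact (mul_eq_zero.mp h).resolve_left (C_ne_zero.mpr hc)

theorem powSubOneIdeal_le_comap_substOne [DecidableEq σ] (i : σ) :
    powSubOneIdeal σ R m ≤ (powSubOneIdeal σ R m).comap (substOne i) :=
  Ideal.span_le.mpr <| Set.range_subset_iff.mpr fun j => by
    rcases eq_or_ne j i with rfl | h
    · simp [substOne_X_self]
    · simpa [substOne_X_of_ne h] using X_pow_sub_one_mem_powSubOneIdeal m j

end PowSubOne

end MvPolynomial

theorem stmt_1_general (m N : ℕ) :
    let I : Ideal (MvPolynomial (Fin N) ℤ) :=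
      Ideal.span (Set.range fun i : Fin N => X i ^ m - 1)
    let θ : MvPolynomial (Fin N) ℤ := ∏ i, (X i - 1)
    NoZeroSMulDivisors ℤ (MvPolynomial (Fin N) ℤ ⧸ (I ⊔ Ideal.span {θ})) := by
  intro I θ
  refine ⟨fun {c x} hcx => or_iff_not_imp_left.mpr fun hc => ?_⟩
  obtain ⟨f, rfl⟩ := Ideal.Quotient.mk_surjective x
  have hI := powSubOneIdeal_le_comap_substOne (σ := Fin N) (R := ℤ) m
  rw [← map_zsmul, Ideal.Quotient.eq_zero_iff_mem] at hcx
  rw [Ideal.Quotient.eq_zero_iff_mem]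
  refine (mem_sup_span_prod_X_sub_one_iff hI).mpr fun i hi => ?_
  have hci := (mem_sup_span_prod_X_sub_one_iff hI).mp hcx i hi
  rw [map_zsmul] at hci
  exact mem_powSubOneIdeal_of_smul_mem m hc hci

/-- Let `A = ℤ[x_1,…,x_N]/(x_1^m-1,…,x_N^m-1)` and `θ = (x_1-1)⋯(x_N-1)`.
Then `A/(θ)` is torsion free as a `ℤ`-module. -/
theorem stmt_1 (m N : ℕ) (hm : 2 ≤ m) (hN : 1 ≤ N) :
    let I : Ideal (MvPolynomial (Fin N) ℤ) :=
      Ideal.span (Set.range fun i : Fin N => X i ^ m - 1)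
    let θ : MvPolynomial (Fin N) ℤ := ∏ i, (X i - 1)
    NoZeroSMulDivisors ℤ (MvPolynomial (Fin N) ℤ ⧸ (I ⊔ Ideal.span {θ})) :=
  stmt_1_general m N
end

section
/- Let A = Z[x_1,...,x_N]/(x_1^m-1,...,x_N^m-1) and θ = (x_1-1)···(x_N-1). Then the annihilator ideal of θ in A is generated by φ(x_1),...,φ(x_N), where φ(t) = t^{m-1}+...+t+1. -/
/-!
Write `J` for the ideal generated by the `φ(xᵢ)`. Since `φ(xᵢ)(xᵢ - 1) = xᵢ^m - 1`, every `φ(xᵢ)`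
annihilates `θ` in `A`, and `I ⊆ J`. Conversely, `xᵢ - 1` divides `φ(xᵢ) - m`, so `m` kills
`G` modulo `J` whenever `xᵢ - 1` does; peeling off the factors of `θ`, `θF ∈ I ⊆ J` gives
`m^N F ∈ J`. Finally `ℤ[x₁, …, x_N]/J` has no `ℤ`-torsion: dividing by the monic `φ` in one
variable at a time reduces this to the same statement in fewer variables.
-/

open MvPolynomial

theorem sub_one_dvd_geom_sum_sub_natCast {R : Type*} [CommRing R] (x : R) (n : ℕ) :
    x - 1 ∣ ∑ k ∈ Finset.range n, x ^ k - n := by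
  have h : x - 1 ∣ ∑ k ∈ Finset.range n, (x ^ k - 1) :=
    Finset.dvd_sum fun k _ => sub_one_dvd_pow_sub_one x k
  simpa [Finset.sum_sub_distrib] using h

namespace Ideal

variable {R : Type*} [CommRing R] {J : Ideal R}

theorem mul_mem_of_dvd_sub_of_mul_mem {a b c G : R} (hb : b ∈ J) (hab : a ∣ b - c)
    (haG : a * G ∈ J) : c * G ∈ J := by
  obtain ⟨d, hd⟩ := hab
  have hc : c * G = b * G - d * (a * G) := by linear_combination (-G) * hd
  rw [hc]
  exact sub_mem (J.mul_mem_right G hb) (J.mul_mem_left d haG)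

theorem pow_card_mul_mem_of_prod_mul_mem {ι : Type*} {s : Finset ι} {a : ι → R} {c : R}
    (h : ∀ i ∈ s, ∀ G, a i * G ∈ J → c * G ∈ J) {G : R} (hG : (∏ i ∈ s, a i) * G ∈ J) :
    c ^ s.card * G ∈ J := by
  classical
  induction s using Finset.induction_on generalizing G with
  | empty => simpa using hG
  | insert i s hi ih =>
    rw [Finset.prod_insert hi, mul_assoc] at hG
    have hcG : (∏ j ∈ s, a j) * (c * G) ∈ J := by
      rw [mul_left_comm]
      exact h i (Finset.mem_insert_self i s) _ hG
    rw [Finset.card_insert_of_notMem hi, pow_succ, mul_assoc]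
    exact ih (fun j hj => h j (Finset.mem_insert_of_mem hj)) hcG

end Ideal

namespace Polynomial

variable {R : Type*} [CommRing R] {K : Ideal R} {g : R[X]}

theorem modByMonic_mem_map_C_of_mem_span_sup (hg : g.Monic) {P : R[X]}
    (hP : P ∈ Ideal.span {g} ⊔ K.map C) : P %ₘ g ∈ K.map C := by
  obtain ⟨_, ha, b, hb, rfl⟩ := Submodule.mem_sup.mp hP
  obtain ⟨a, rfl⟩ := Ideal.mem_span_singleton'.mp ha
  have hgg : g %ₘ g = 0 := (modByMonic_eq_zero_iff_dvd hg).mpr dvd_rfl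
  rw [add_modByMonic, mul_modByMonic, hgg, mul_zero, zero_modByMonic, zero_add]
  rw [← Ideal.mk_ker (I := K), ← ker_mapRingHom] at hb ⊢
  rw [RingHom.mem_ker, coe_mapRingHom, map_modByMonic _ hg]
  rw [RingHom.mem_ker, coe_mapRingHom] at hb
  rw [hb, zero_modByMonic]

theorem mem_span_sup_of_C_mul_mem (hg : g.Monic) {r : R} (hr : ∀ a, r * a ∈ K → a ∈ K)
    {F : R[X]} (hF : C r * F ∈ Ideal.span {g} ⊔ K.map C) :
    F ∈ Ideal.span {g} ⊔ K.map C := by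
  have hmod : C r * (F %ₘ g) ∈ K.map C := by
    simpa only [← smul_eq_C_mul, smul_modByMonic] using
      modByMonic_mem_map_C_of_mem_span_sup hg hF
  rw [← modByMonic_add_div F g]
  refine add_mem (Ideal.mem_sup_right ?_)
    (Ideal.mem_sup_left (Ideal.mul_mem_right _ _ (Ideal.mem_span_singleton_self g)))
  rw [Ideal.mem_map_C_iff] at hmod ⊢
  exact fun j => hr _ (by simpa only [coeff_C_mul] using hmod j)

end Polynomial

noncomputable def geomSumIdeal (R σ : Type*) [CommRing R] (m : ℕ) : Ideal (MvPolynomial σ R) :=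
  Ideal.span (Set.range fun i => ∑ k ∈ Finset.range m, X i ^ k)

theorem geom_sum_X_mem_geomSumIdeal {R σ : Type*} [CommRing R] (m : ℕ) (i : σ) :
    ∑ k ∈ Finset.range m, X i ^ k ∈ geomSumIdeal R σ m :=
  Ideal.subset_span ⟨i, rfl⟩

theorem map_finSuccEquiv_geomSumIdeal (R : Type*) [CommRing R] (n m : ℕ) :
    (geomSumIdeal R (Fin (n + 1)) m).map (finSuccEquiv R n) =
      Ideal.span {∑ k ∈ Finset.range m, Polynomial.X ^ k} ⊔
        (geomSumIdeal R (Fin n) m).map Polynomial.C := by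
  rw [geomSumIdeal, ← Fin.cons_self_tail (fun i : Fin (n + 1) => ∑ k ∈ Finset.range m, X i ^ k),
    Fin.range_cons, Ideal.span_insert, Ideal.map_sup, Ideal.map_span, Ideal.map_span, geomSumIdeal,
    Ideal.map_span, ← Set.range_comp, ← Set.range_comp, Set.image_singleton]
  simp [Fin.tail, Function.comp_def, finSuccEquiv_X_zero, finSuccEquiv_X_succ]

theorem mem_geomSumIdeal_of_C_mul_mem {R : Type*} [CommRing R] {m : ℕ} (hm : m ≠ 0) {r : R}
    (hr : r ∈ nonZeroDivisors R) (n : ℕ) {F : MvPolynomial (Fin n) R}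
    (hF : C r * F ∈ geomSumIdeal R (Fin n) m) : F ∈ geomSumIdeal R (Fin n) m := by
  induction n with
  | zero =>
    simp only [geomSumIdeal, Set.range_eq_empty, Ideal.span_empty, Ideal.mem_bot] at hF ⊢
    ext s
    simpa using (mem_nonZeroDivisors_iff.mp hr).1 _ (by simpa using congrArg (coeff s) hF)
  | succ n ih =>
    have hmem : ∀ G, G ∈ geomSumIdeal R (Fin (n + 1)) m ↔
        finSuccEquiv R n G ∈ (geomSumIdeal R (Fin (n + 1)) m).map (finSuccEquiv R n) := fun G => by
      rw [Ideal.mem_map_of_equiv]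
      exact ⟨fun h => ⟨G, h, rfl⟩, fun ⟨_, hx, hxe⟩ => (finSuccEquiv R n).injective hxe ▸ hx⟩
    rw [hmem, map_finSuccEquiv_geomSumIdeal] at hF ⊢
    refine Polynomial.mem_span_sup_of_C_mul_mem (Polynomial.monic_geom_sum_X hm) (r := C r)
      (fun _ => ih) ?_
    simpa [finSuccEquiv_apply] using hF

theorem span_X_pow_sub_one_le_geomSumIdeal (R σ : Type*) [CommRing R] (m : ℕ) :
    Ideal.span (Set.range fun i : σ => X i ^ m - 1) ≤ geomSumIdeal R σ m := by
  refine Ideal.span_le.mpr (Set.range_subset_iff.mpr fun i => ?_)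
  rw [← geom_sum_mul]
  exact Ideal.mul_mem_right _ _ (geom_sum_X_mem_geomSumIdeal m i)

theorem mul_prod_X_sub_one_mem_of_mem_geomSumIdeal {R σ : Type*} [CommRing R] [Fintype σ]
    {m : ℕ} {F : MvPolynomial σ R} (hF : F ∈ geomSumIdeal R σ m) :
    F * ∏ i, (X i - 1) ∈ Ideal.span (Set.range fun i : σ => X i ^ m - 1) := by
  classical
  have hcolon : geomSumIdeal R σ m ≤ (Ideal.span (Set.range fun i : σ => X i ^ m - 1)).colon
      (Ideal.span {∏ i, (X i - 1 : MvPolynomial σ R)} : Set _) := by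
    refine Ideal.span_le.mpr (Set.range_subset_iff.mpr fun i => ?_)
    rw [SetLike.mem_coe, Ideal.mem_colon_span_singleton,
      ← Finset.mul_prod_erase Finset.univ _ (Finset.mem_univ i), ← mul_assoc, geom_sum_mul]
    exact Ideal.mul_mem_right _ _ (Ideal.subset_span ⟨i, rfl⟩)
  exact Ideal.mem_colon_span_singleton.mp (hcolon hF)

theorem mem_geomSumIdeal_of_prod_X_sub_one_mul_mem {R : Type*} [CommRing R] {m n : ℕ}
    (hm : m ≠ 0) (hmR : (m : R) ∈ nonZeroDivisors R) {F : MvPolynomial (Fin n) R}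
    (hF : (∏ i, (X i - 1)) * F ∈ geomSumIdeal R (Fin n) m) : F ∈ geomSumIdeal R (Fin n) m := by
  have hmF : (m : MvPolynomial (Fin n) R) ^ n * F ∈ geomSumIdeal R (Fin n) m := by
    simpa using Ideal.pow_card_mul_mem_of_prod_mul_mem
      (fun i _ _ => Ideal.mul_mem_of_dvd_sub_of_mul_mem (geom_sum_X_mem_geomSumIdeal m i)
        (sub_one_dvd_geom_sum_sub_natCast (X i) m)) hF
  exact mem_geomSumIdeal_of_C_mul_mem hm (pow_mem hmR n) n (by simpa using hmF)

theorem stmt_2_general (m N : ℕ) (hm : 2 ≤ m)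
    (I : Ideal (MvPolynomial (Fin N) ℤ))
    (hI : I = Ideal.span (Set.range fun i : Fin N => X i ^ m - 1))
    (θ : MvPolynomial (Fin N) ℤ) (hθ : θ = ∏ i, (X i - 1)) :
    ∀ f : MvPolynomial (Fin N) ℤ ⧸ I,
      f * Ideal.Quotient.mk I θ = 0 ↔
        f ∈ Ideal.span
          (Set.range fun i : Fin N =>
            Ideal.Quotient.mk I (∑ k ∈ Finset.range m, X i ^ k)) := by
  subst hI hθ
  intro f
  obtain ⟨F, rfl⟩ := Ideal.Quotient.mk_surjective f
  have hIJ := span_X_pow_sub_one_le_geomSumIdeal ℤ (Fin N) m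
  have hspan : Ideal.span (Set.range fun i : Fin N => Ideal.Quotient.mk
      (Ideal.span (Set.range fun i : Fin N => X i ^ m - 1)) (∑ k ∈ Finset.range m, X i ^ k)) =
      (geomSumIdeal ℤ (Fin N) m).map (Ideal.Quotient.mk _) := by
    rw [geomSumIdeal, Ideal.map_span, ← Set.range_comp]
    rfl
  rw [hspan, ← map_mul, Ideal.Quotient.eq_zero_iff_mem, Ideal.mem_quotient_iff_mem hIJ]
  have hmℤ : (m : ℤ) ∈ nonZeroDivisors ℤ := mem_nonZeroDivisors_of_ne_zero (by omega)
  exact ⟨fun h => mem_geomSumIdeal_of_prod_X_sub_one_mul_mem (by omega) hmℤ (mul_comm F _ ▸ hIJ h),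
    mul_prod_X_sub_one_mem_of_mem_geomSumIdeal⟩

/-- Let `A = ℤ[x_1,…,x_N]/(x_1^m-1,…,x_N^m-1)` and `θ = (x_1-1)⋯(x_N-1)`.
Then the annihilator ideal of `θ` in `A` is generated by `φ(x_1),…,φ(x_N)`,
where `φ(t) = t^{m-1}+⋯+t+1`. -/
theorem stmt_2 (m N : ℕ) (hm : 2 ≤ m) (hN : 1 ≤ N)
    (I : Ideal (MvPolynomial (Fin N) ℤ))
    (hI : I = Ideal.span (Set.range fun i : Fin N => X i ^ m - 1))
    (θ : MvPolynomial (Fin N) ℤ) (hθ : θ = ∏ i, (X i - 1)) :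
    ∀ f : MvPolynomial (Fin N) ℤ ⧸ I,
      f * Ideal.Quotient.mk I θ = 0 ↔
        f ∈ Ideal.span
          (Set.range fun i : Fin N =>
            Ideal.Quotient.mk I (∑ k ∈ Finset.range m, X i ^ k)) :=
  stmt_2_general m N hm I hI θ hθ
end

section
/- Let A = Z[x_1,...,x_N]/(x_1^m-1,...,x_N^m-1) and θ = (x_1-1)···(x_N-1). The Z-module A/(θ) is free with rank equal to the number of N-tuples (a_1,...,a_N) of m-th roots of unity in C such that a_i = 1 for at least one index i, i.e. rank A/(θ) = m^N - (m-1)^N. -/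
/-!
Write `x i` for the image of `X i` in `A/(θ)`. The monomials `∏ x i ^ f i` with every `f i < m`
and some `f i = 0` span `A/(θ)` over `ℤ`: exponents reduce modulo `m`, and a monomial with all
exponents positive equals `x ^ (f - 1) * (∏ x i - θ)`, a signed sum of monomials of smaller total
degree. There are `m ^ N - (m - 1) ^ N` of them, as many as there are points in the set `S` of
tuples of `m`-th roots of unity with a coordinate `1`. Evaluation at the points of `S` kills `θ`,
and since every function on a finite set of points is polynomial, the same reduction shows that
the images of these monomials span the `|S|`-dimensional space `S → ℂ`. Hence the images are
linearly independent, and so are the monomials: they form a `ℤ`-basis of `A/(θ)`.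
-/

open MvPolynomial Finset

theorem card_filter_piFinset_exists_eq {ι α : Type*} [Fintype ι] [DecidableEq ι] [DecidableEq α]
    (t : Finset α) {z : α} (hz : z ∈ t) :
    #{f ∈ Fintype.piFinset fun _ : ι => t | ∃ i, f i = z} =
      #t ^ Fintype.card ι - (#t - 1) ^ Fintype.card ι := by
  have hcompl : {f ∈ Fintype.piFinset fun _ : ι => t | ¬∃ i, f i = z} =
      Fintype.piFinset fun _ => t.erase z := by
    ext f
    simp [Fintype.mem_piFinset, forall_and, and_comm]
  have htotal := card_filter_add_card_filter_not
    (s := Fintype.piFinset fun _ : ι => t) (p := fun f => ∃ i, f i = z)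
  simp only [hcompl, Fintype.card_piFinset, prod_const, card_univ, card_erase_of_mem hz] at htotal
  omega

theorem RingHom.pi_surjective_of_pairwise_ker_ne {S R K : Type*} [_root_.Finite S] [CommRing R]
    [Field K] (φ : S → R →+* K) (hφ : ∀ s, Function.Surjective (φ s))
    (hker : Pairwise fun s t => RingHom.ker (φ s) ≠ RingHom.ker (φ t)) :
    Function.Surjective (RingHom.pi φ) := by
  have hmax s : (RingHom.ker (φ s)).IsMaximal := RingHom.ker_isMaximal_of_surjective _ (hφ s)
  intro g
  choose x hx using fun s => hφ s (g s)
  obtain ⟨r, hr⟩ := Ideal.exists_forall_sub_mem_ideal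
    (fun s t hst => Ideal.isCoprime_of_isMaximal (hker hst)) x
  refine ⟨r, funext fun s => ?_⟩
  rw [RingHom.pi_apply, ← hx s, ← sub_eq_zero, ← map_sub]
  exact hr s

theorem MvPolynomial.aeval_surjective_of_injective {ι K S : Type*} [Field K] [Finite S]
    {p : S → ι → K} (hp : Function.Injective p) :
    Function.Surjective (aeval (fun i s => p s i) : MvPolynomial ι K →ₐ[K] S → K) := by
  have hker : Pairwise fun s t => RingHom.ker (eval (p s)) ≠ RingHom.ker (eval (p t)) := by
    intro s t hst hker
    obtain ⟨i, hi⟩ := Function.ne_iff.mp (hp.ne hst)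
    have : X i - C (p s i) ∈ RingHom.ker (eval (p t)) := hker ▸ by simp [RingHom.mem_ker]
    exact hi (by simpa [RingHom.mem_ker, sub_eq_zero, eq_comm] using this)
  intro g
  obtain ⟨q, hq⟩ := RingHom.pi_surjective_of_pairwise_ker_ne _ (fun s c => ⟨C c, eval_C c⟩) hker g
  refine ⟨q, ?_⟩
  ext s
  rw [← hq, RingHom.pi_apply, ← coe_aeval_eq_eval]
  exact comp_aeval_apply (fun i s => p s i) (Pi.evalAlgHom K (fun _ => K) s) q

theorem prod_eq_neg_sum_of_prod_sub_one_eq_zero {ι R : Type*} [CommRing R] [DecidableEq ι]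
    {s : Finset ι} {y : ι → R} (h : ∏ i ∈ s, (y i - 1) = 0) :
    ∏ i ∈ s, y i = -∑ t ∈ s.powerset.erase s, (∏ i ∈ t, y i) * (-1) ^ #(s \ t) := by
  have hexpand := prod_add y (fun _ => -1) s
  simp only [← sub_eq_add_neg, h, prod_const, ← add_sum_erase _ _ (mem_powerset_self s),
    sdiff_self, bot_eq_empty, card_empty, pow_zero, mul_one] at hexpand
  rw [eq_neg_iff_add_eq_zero, hexpand]

abbrev ReducedExponent (ι : Type*) (m : ℕ) [NeZero m] := {f : ι → Fin m // ∃ i, f i = 0}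

section ReducedMonomial

variable {ι R : Type*} [Fintype ι] {m : ℕ} [NeZero m] [CommRing R]

def reducedMonomial (y : ι → R) (f : ReducedExponent ι m) : R := ∏ i, y i ^ (f.1 i : ℕ)

theorem map_reducedMonomial {F R' : Type*} [CommRing R'] [FunLike F R R'] [RingHomClass F R R']
    (φ : F) (y : ι → R) (f : ReducedExponent ι m) :
    φ (reducedMonomial y f) = reducedMonomial (φ ∘ y) f := by
  simp [reducedMonomial, map_prod]

variable (R₀ : Type*) [CommRing R₀] [Algebra R₀ R] {y : ι → R}

theorem prod_pow_mem_span_reducedMonomial_of_lt (hθ : ∏ i, (y i - 1) = 0) (d : ι → ℕ)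
    (hd : ∀ i, d i < m) :
    ∏ i, y i ^ d i ∈ Submodule.span R₀ (Set.range (reducedMonomial (m := m) y)) := by
  classical
  induction hn : ∑ i, d i using Nat.strong_induction_on generalizing d with | _ n ih => ?_
  by_cases hzero : ∃ i, d i = 0
  · exact Submodule.subset_span ⟨⟨fun i => ⟨d i, hd i⟩, by simpa [Fin.ext_iff] using hzero⟩, rfl⟩
  push Not at hzero
  have hsplit : ∏ i, y i ^ d i = (∏ i, y i ^ (d i - 1)) * ∏ i, y i := by
    rw [← prod_mul_distrib]
    exact prod_congr rfl fun i _ => by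
      rw [← pow_succ, Nat.sub_add_cancel (Nat.one_le_iff_ne_zero.mpr (hzero i))]
  rw [hsplit, prod_eq_neg_sum_of_prod_sub_one_eq_zero hθ, mul_neg, mul_sum]
  refine Submodule.neg_mem _ (Submodule.sum_mem _ fun t ht => ?_)
  obtain ⟨htne, -⟩ := mem_erase.mp ht
  obtain ⟨j, -, hj⟩ := exists_of_ssubset (ssubset_univ_iff.mpr htne)
  set e : ι → ℕ := fun i => d i - 1 + if i ∈ t then 1 else 0
  have he : (∏ i, y i ^ (d i - 1)) * ((∏ i ∈ t, y i) * (-1) ^ #(univ \ t)) =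
      ((-1 : ℤ) ^ #(univ \ t)) • ∏ i, y i ^ e i := by
    simp only [e, pow_add, prod_mul_distrib, pow_ite, pow_one, pow_zero, prod_ite_mem, univ_inter,
      zsmul_eq_mul, Int.cast_pow, Int.cast_neg, Int.cast_one]
    ring
  rw [he]
  refine zsmul_mem (ih _ ?_ e (fun i => ?_) rfl) _
  · rw [← hn]
    refine sum_lt_sum (fun i _ => ?_) ⟨j, mem_univ j, ?_⟩
    · have := hzero i; simp only [e]; split_ifs <;> omega
    · have := hzero j; simp only [e, hj, if_false]; omega
  · have := hd i; have := hzero i; simp only [e]; split_ifs <;> omega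

theorem prod_pow_mem_span_reducedMonomial (hy : ∀ i, y i ^ m = 1) (hθ : ∏ i, (y i - 1) = 0)
    (d : ι → ℕ) :
    ∏ i, y i ^ d i ∈ Submodule.span R₀ (Set.range (reducedMonomial (m := m) y)) := by
  rw [prod_congr rfl fun i _ => pow_eq_pow_mod (d i) (hy i)]
  exact prod_pow_mem_span_reducedMonomial_of_lt R₀ hθ _ fun i => Nat.mod_lt _ (NeZero.pos m)

theorem span_reducedMonomial_eq_top
    (hgen : Function.Surjective (aeval y : MvPolynomial ι R₀ →ₐ[R₀] R))
    (hy : ∀ i, y i ^ m = 1) (hθ : ∏ i, (y i - 1) = 0) :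
    Submodule.span R₀ (Set.range (reducedMonomial (m := m) y)) = ⊤ := by
  refine eq_top_iff.mpr fun r _ => ?_
  obtain ⟨p, rfl⟩ := hgen r
  rw [p.as_sum, map_sum]
  refine Submodule.sum_mem _ fun v _ => ?_
  rw [aeval_monomial, ← Algebra.smul_def, Finsupp.prod_fintype _ _ fun i => pow_zero _]
  exact Submodule.smul_mem _ _ (prod_pow_mem_span_reducedMonomial R₀ hy hθ v)

end ReducedMonomial

theorem card_reducedExponent (ι : Type*) [Fintype ι] [DecidableEq ι] (m : ℕ) [NeZero m] :
    Nat.card (ReducedExponent ι m) = m ^ Fintype.card ι - (m - 1) ^ Fintype.card ι := by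
  rw [Nat.card_eq_fintype_card, Fintype.card_subtype, ← Fintype.piFinset_univ,
    card_filter_piFinset_exists_eq _ (mem_univ 0), card_univ, Fintype.card_fin]

noncomputable def rootTuples (ι : Type*) [Fintype ι] [DecidableEq ι] (m : ℕ) : Finset (ι → ℂ) :=
  {a ∈ Fintype.piFinset fun _ => Polynomial.nthRootsFinset m (1 : ℂ) | ∃ i, a i = 1}

section RootTuples

variable {ι : Type*} [Fintype ι] [DecidableEq ι] {m : ℕ}

theorem coe_rootTuples (hm : 0 < m) :
    (rootTuples ι m : Set (ι → ℂ)) = {a | (∀ i, a i ^ m = 1) ∧ ∃ i, a i = 1} := by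
  ext a
  simp [rootTuples, Polynomial.mem_nthRootsFinset hm]

theorem card_rootTuples (hm : 0 < m) :
    #(rootTuples ι m) = m ^ Fintype.card ι - (m - 1) ^ Fintype.card ι := by
  rw [rootTuples, card_filter_piFinset_exists_eq _
      ((Polynomial.mem_nthRootsFinset hm 1).mpr (one_pow m)),
    (Complex.isPrimitiveRoot_exp m hm.ne').card_nthRootsFinset]

end RootTuples

section Quotient

variable (ι R₀ : Type*) [Fintype ι] [CommRing R₀] (m : ℕ)

noncomputable abbrev relationIdeal : Ideal (MvPolynomial ι R₀) :=
  Ideal.span (Set.range fun i => X i ^ m - 1) ⊔ Ideal.span {∏ i, (X i - 1)}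

variable {ι R₀ m}

theorem relationIdeal_le_ker_aeval {R : Type*} [CommRing R] [Algebra R₀ R] {y : ι → R}
    (hy : ∀ i, y i ^ m = 1) (hθ : ∏ i, (y i - 1) = 0) :
    relationIdeal ι R₀ m ≤ RingHom.ker (aeval y) := by
  refine sup_le (Ideal.span_le.mpr ?_) (Ideal.span_le.mpr ?_)
  · rintro _ ⟨i, rfl⟩
    simp [hy]
  · simpa using hθ

theorem span_reducedMonomial_quotient_eq_top [NeZero m] :
    Submodule.span R₀ (Set.range (reducedMonomial (m := m)
      fun i => Ideal.Quotient.mk (relationIdeal ι R₀ m) (X i))) = ⊤ := by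
  refine span_reducedMonomial_eq_top R₀ ?_ (fun i => ?_) ?_
  · have : aeval (fun i => Ideal.Quotient.mk (relationIdeal ι R₀ m) (X i)) =
        Ideal.Quotient.mkₐ R₀ _ :=
      algHom_ext fun i => by rw [aeval_X, Ideal.Quotient.mkₐ_eq_mk]
    rw [this]
    exact Ideal.Quotient.mkₐ_surjective R₀ _
  · rw [← map_pow, ← map_one (Ideal.Quotient.mk _), Ideal.Quotient.eq]
    exact Ideal.mem_sup_left (Ideal.subset_span ⟨i, rfl⟩)
  · simp only [← map_one (Ideal.Quotient.mk _), ← map_sub, ← map_prod]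
    exact Ideal.Quotient.eq_zero_iff_mem.mpr
      (Ideal.mem_sup_right (Ideal.mem_span_singleton_self _))

theorem linearIndependent_reducedMonomial_quotient [DecidableEq ι] [NeZero m] :
    LinearIndependent ℤ (reducedMonomial (m := m)
      fun i => Ideal.Quotient.mk (relationIdeal ι ℤ m) (X i)) := by
  let z : ι → rootTuples ι m → ℂ := fun i a => (a : ι → ℂ) i
  have hroot (a : rootTuples ι m) := (coe_rootTuples (ι := ι) (NeZero.pos m)).subset a.2
  have hz (i : ι) : z i ^ m = 1 := funext fun a => (hroot a).1 i
  have hθz : ∏ i, (z i - 1) = 0 := funext fun a => by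
    obtain ⟨i, hi⟩ := (hroot a).2
    simpa [Finset.prod_apply] using prod_eq_zero (mem_univ i) (by simp [z, hi])
  have hspan : Submodule.span ℂ (Set.range (reducedMonomial (m := m) z)) = ⊤ :=
    span_reducedMonomial_eq_top ℂ (aeval_surjective_of_injective Subtype.val_injective) hz hθz
  have hli : LinearIndependent ℂ (reducedMonomial (m := m) z) :=
    linearIndependent_of_top_le_span_of_card_eq_finrank hspan.ge <| by
      rw [Module.finrank_fintype_fun_eq_card, Fintype.card_coe, Fintype.card_eq_nat_card,
        card_reducedExponent, card_rootTuples (NeZero.pos m)]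
  let ev := Ideal.Quotient.lift (relationIdeal ι ℤ m) (aeval z).toRingHom
    fun _ hp => RingHom.mem_ker.mp (relationIdeal_le_ker_aeval hz hθz hp)
  refine LinearIndependent.of_comp ev.toAddMonoidHom.toIntLinearMap ?_
  have hev : ev.toAddMonoidHom.toIntLinearMap ∘
      (reducedMonomial fun i => Ideal.Quotient.mk _ (X i)) = reducedMonomial (m := m) z :=
    funext fun f => by simp [ev, map_reducedMonomial, Function.comp_def]
  rw [hev]
  exact hli.restrict_scalars' ℤ

end Quotient

noncomputable def reducedMonomialBasis (ι : Type*) [Fintype ι] [DecidableEq ι] (m : ℕ)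
    [NeZero m] :
    Module.Basis (ReducedExponent ι m) ℤ (MvPolynomial ι ℤ ⧸ relationIdeal ι ℤ m) :=
  .mk linearIndependent_reducedMonomial_quotient span_reducedMonomial_quotient_eq_top.ge

theorem stmt_3_general (m N : ℕ) (hm : 2 ≤ m)
    (I : Ideal (MvPolynomial (Fin N) ℤ))
    (hI : I = Ideal.span (Set.range fun i : Fin N => X i ^ m - 1))
    (θ : MvPolynomial (Fin N) ℤ) (hθ : θ = ∏ i, (X i - 1)) :
    Module.Free ℤ (MvPolynomial (Fin N) ℤ ⧸ (I ⊔ Ideal.span {θ})) ∧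
    Module.finrank ℤ (MvPolynomial (Fin N) ℤ ⧸ (I ⊔ Ideal.span {θ})) =
      Set.ncard {a : Fin N → ℂ | (∀ i, a i ^ m = 1) ∧ ∃ i, a i = 1} ∧
    Set.ncard {a : Fin N → ℂ | (∀ i, a i ^ m = 1) ∧ ∃ i, a i = 1} =
      m ^ N - (m - 1) ^ N := by
  subst hI hθ
  have : NeZero m := ⟨by omega⟩
  have hcard : Set.ncard {a : Fin N → ℂ | (∀ i, a i ^ m = 1) ∧ ∃ i, a i = 1} =
      m ^ N - (m - 1) ^ N := by
    rw [← coe_rootTuples (NeZero.pos m), Set.ncard_coe_finset, card_rootTuples (NeZero.pos m),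
      Fintype.card_fin]
  refine ⟨.of_basis (reducedMonomialBasis (Fin N) m), ?_, hcard⟩
  rw [Module.finrank_eq_nat_card_basis (reducedMonomialBasis (Fin N) m), card_reducedExponent,
    Fintype.card_fin, hcard]

/-- Let `A = ℤ[x_1,…,x_N]/(x_1^m-1,…,x_N^m-1)` and `θ = (x_1-1)⋯(x_N-1)`.
The `ℤ`-module `A/(θ)` is free, of rank equal to the number of `N`-tuples of
`m`-th roots of unity in `ℂ` having at least one coordinate equal to `1`,
i.e. of rank `m^N - (m-1)^N`. -/
theorem stmt_3 (m N : ℕ) (hm : 2 ≤ m) (hN : 1 ≤ N)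
    (I : Ideal (MvPolynomial (Fin N) ℤ))
    (hI : I = Ideal.span (Set.range fun i : Fin N => X i ^ m - 1))
    (θ : MvPolynomial (Fin N) ℤ) (hθ : θ = ∏ i, (X i - 1)) :
    Module.Free ℤ (MvPolynomial (Fin N) ℤ ⧸ (I ⊔ Ideal.span {θ})) ∧
    Module.finrank ℤ (MvPolynomial (Fin N) ℤ ⧸ (I ⊔ Ideal.span {θ})) =
      Set.ncard {a : Fin N → ℂ | (∀ i, a i ^ m = 1) ∧ ∃ i, a i = 1} ∧
    Set.ncard {a : Fin N → ℂ | (∀ i, a i ^ m = 1) ∧ ∃ i, a i = 1} =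
      m ^ N - (m - 1) ^ N :=
  stmt_3_general m N hm I hI θ hθ
end

section
/- Let A = Z[x_1,...,x_N]/(x_1^m-1,...,x_N^m-1), θ = (x_1-1)···(x_N-1), and φ(t) = t^{m-1}+...+t+1. The multiplication map f ↦ fθ induces an isomorphism of A-modules from Ā := A/(φ(x_1),...,φ(x_N)) onto the principal ideal (θ) of A. -/
/-!
Multiplication by `θ` kills each `φ(xᵢ)`, because `φ(xᵢ) θ = (xᵢ^m - 1) ∏_{j ≠ i} (xⱼ - 1)`;
the content of the theorem is that these elements generate the whole annihilator of `θ` in `A`,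
so that `Ā = A ⧸ Ann θ ≅ (θ)`.

This is proved by induction on the number of variables, writing `R[x₀, …, xₙ] = S[X]` with
`S = R[x₁, …, xₙ]`, `I = (xᵢ^m - 1)` and `J = (φ(xᵢ))` in `S`, and `t = (x₁ - 1)⋯(xₙ - 1)`.
If `g (X - 1) t ∈ (X^m - 1) + I[X]`, then in `(S ⧸ I)[X]` the non-zero-divisor `X - 1` cancels
from `X^m - 1 = (X - 1) φ(X)`, so `φ(X)` divides `t g`. Dividing `g` by the monic `φ(X)`, the
remainder `r` therefore has `t r ≡ 0` modulo `I`, coefficientwise, so `r ∈ J[X]` by induction.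
-/

open MvPolynomial

namespace Polynomial

variable {S : Type*} [CommRing S]

theorem geom_sum_X_dvd_of_X_pow_sub_one_dvd {m : ℕ} {p : S[X]}
    (h : X ^ m - 1 ∣ (X - 1) * p) : ∑ k ∈ Finset.range m, (X : S[X]) ^ k ∣ p := by
  obtain ⟨c, hc⟩ := h
  refine ⟨c, (monic_X_sub_C (1 : S)).isRegular.left ?_⟩
  simp only [map_one]
  rw [hc, ← mul_geom_sum, mul_assoc]

theorem mem_span_geom_sum_sup_map_C {m : ℕ} (hm : m ≠ 0) {I J : Ideal S} {t : S}
    (ht : ∀ a, a * t ∈ I → a ∈ J) {g : S[X]}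
    (hg : g * ((X - 1) * C t) ∈ Ideal.span {X ^ m - 1} ⊔ I.map C) :
    g ∈ Ideal.span {∑ k ∈ Finset.range m, X ^ k} ⊔ J.map C := by
  set φ : S[X] := ∑ k ∈ Finset.range m, X ^ k
  set π : S[X] →+* (S ⧸ I)[X] := mapRingHom (Ideal.Quotient.mk I)
  have hφ : φ.Monic := monic_geom_sum_X hm
  have hπφ : φ.map (Ideal.Quotient.mk I) = ∑ k ∈ Finset.range m, X ^ k := by
    simp [φ, Polynomial.map_sum]
  have hφ_dvd : φ.map (Ideal.Quotient.mk I) ∣ π (C t * g) := by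
    obtain ⟨a, ha, b, hb, hab⟩ := Submodule.mem_sup.mp hg
    have hπb : π b = 0 := by
      rwa [← RingHom.mem_ker, ker_mapRingHom, Ideal.mk_ker]
    obtain ⟨c, rfl⟩ := Ideal.mem_span_singleton'.mp ha
    rw [hπφ]
    refine geom_sum_X_dvd_of_X_pow_sub_one_dvd ⟨π c, ?_⟩
    have hπab := congrArg π hab
    simp only [map_add, hπb, add_zero, map_mul, map_sub, map_pow, π, coe_mapRingHom, map_X,
      map_one] at hπab ⊢
    linear_combination -hπab
  have hr : g %ₘ φ ∈ J.map C := by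
    have htr : π (C t * (g %ₘ φ)) = 0 := by
      have := (modByMonic_eq_zero_iff_dvd (hφ.map _)).mpr hφ_dvd
      simpa [π, map_modByMonic _ hφ, ← smul_eq_C_mul, smul_modByMonic] using this
    rw [← RingHom.mem_ker, ker_mapRingHom, Ideal.mk_ker, Ideal.mem_map_C_iff] at htr
    rw [Ideal.mem_map_C_iff]
    intro k
    exact ht _ (by simpa [coeff_C_mul, mul_comm] using htr k)
  rw [← modByMonic_add_div g φ]
  exact add_mem (Ideal.mem_sup_right hr)
    (Ideal.mem_sup_left (Ideal.mul_mem_right _ _ (Ideal.subset_span rfl)))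

end Polynomial

theorem Ideal.span_range_C {S ι : Type*} [CommRing S] (v : ι → S) :
    Ideal.span (Set.range fun i => Polynomial.C (v i)) =
      (Ideal.span (Set.range v)).map Polynomial.C := by
  rw [Ideal.map_span, ← Set.range_comp]
  rfl

namespace MvPolynomial

variable {R : Type*} [CommRing R]

section FinSuccEquiv

variable {n : ℕ}

theorem map_finSuccEquiv_span_range (v : Fin (n + 1) → MvPolynomial (Fin (n + 1)) R) :
    (Ideal.span (Set.range v)).map (finSuccEquiv R n).toRingEquiv =
      Ideal.span {finSuccEquiv R n (v 0)} ⊔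
        Ideal.span (Set.range fun j : Fin n => finSuccEquiv R n (v j.succ)) := by
  rw [Ideal.map_span, ← Set.range_comp, Fin.range_fin_succ, Ideal.span_insert]
  rfl

theorem map_finSuccEquiv_span_X_pow_sub_one (m : ℕ) :
    (Ideal.span (Set.range fun i : Fin (n + 1) => (X i ^ m - 1 : MvPolynomial _ R))).map
        (finSuccEquiv R n).toRingEquiv =
      Ideal.span {Polynomial.X ^ m - 1} ⊔
        (Ideal.span (Set.range fun i : Fin n => (X i ^ m - 1 : MvPolynomial _ R))).map
          Polynomial.C := by
  rw [map_finSuccEquiv_span_range, ← Ideal.span_range_C]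
  simp [finSuccEquiv_X_zero, finSuccEquiv_X_succ]

theorem map_finSuccEquiv_span_geom_sum (m : ℕ) :
    (Ideal.span (Set.range fun i : Fin (n + 1) =>
        ∑ k ∈ Finset.range m, (X i ^ k : MvPolynomial _ R))).map (finSuccEquiv R n).toRingEquiv =
      Ideal.span {∑ k ∈ Finset.range m, Polynomial.X ^ k} ⊔
        (Ideal.span (Set.range fun i : Fin n =>
          ∑ k ∈ Finset.range m, (X i ^ k : MvPolynomial _ R))).map Polynomial.C := by
  rw [map_finSuccEquiv_span_range, ← Ideal.span_range_C]
  simp [finSuccEquiv_X_zero, finSuccEquiv_X_succ]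

theorem finSuccEquiv_prod_X_sub_one :
    finSuccEquiv R n (∏ i, (X i - 1)) = (Polynomial.X - 1) * Polynomial.C (∏ j, (X j - 1)) := by
  simp [Fin.prod_univ_succ, finSuccEquiv_X_zero, finSuccEquiv_X_succ]

end FinSuccEquiv

theorem geom_sum_mul_prod_X_sub_one_mem {σ : Type*} [Fintype σ] [DecidableEq σ] (m : ℕ) (i : σ) :
    (∑ k ∈ Finset.range m, X i ^ k) * ∏ j, (X j - 1) ∈
      Ideal.span (Set.range fun j => (X j ^ m - 1 : MvPolynomial σ R)) := by
  rw [← Finset.mul_prod_erase _ _ (Finset.mem_univ i), ← mul_assoc, geom_sum_mul]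
  exact Ideal.mul_mem_right _ _ (Ideal.subset_span ⟨i, rfl⟩)

theorem mem_span_geom_sum_of_mul_prod_mem {m : ℕ} (hm : m ≠ 0) :
    ∀ {n : ℕ} (f : MvPolynomial (Fin n) R),
      f * ∏ i, (X i - 1) ∈ Ideal.span (Set.range fun i => X i ^ m - 1) →
        f ∈ Ideal.span (Set.range fun i => ∑ k ∈ Finset.range m, X i ^ k)
  | 0, f, h => by
    simpa using h
  | n + 1, f, h => by
    rw [← Ideal.apply_mem_of_equiv_iff (f := (finSuccEquiv R n).toRingEquiv)] at h ⊢
    rw [map_finSuccEquiv_span_geom_sum]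
    rw [map_finSuccEquiv_span_X_pow_sub_one, AlgEquiv.coe_ringEquiv, map_mul,
      finSuccEquiv_prod_X_sub_one] at h
    exact Polynomial.mem_span_geom_sum_sup_map_C hm (mem_span_geom_sum_of_mul_prod_mem hm) h

theorem torsionOf_mk_prod_X_sub_one {m n : ℕ} (hm : m ≠ 0) :
    let I : Ideal (MvPolynomial (Fin n) R) := Ideal.span (Set.range fun i => X i ^ m - 1)
    Ideal.torsionOf (MvPolynomial (Fin n) R ⧸ I) (MvPolynomial (Fin n) R ⧸ I)
        (Ideal.Quotient.mk I (∏ i, (X i - 1))) =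
      Ideal.span (Set.range fun i => Ideal.Quotient.mk I (∑ k ∈ Finset.range m, X i ^ k)) := by
  intro I
  refine le_antisymm (fun x hx => ?_) (Ideal.span_le.mpr ?_)
  · obtain ⟨f, rfl⟩ := Ideal.Quotient.mk_surjective x
    rw [Ideal.mem_torsionOf_iff, smul_eq_mul, ← map_mul, Ideal.Quotient.eq_zero_iff_mem] at hx
    rw [Set.range_comp' (Ideal.Quotient.mk I), ← Ideal.map_span]
    exact Ideal.mem_map_of_mem _ (mem_span_geom_sum_of_mul_prod_mem hm f hx)
  · rintro _ ⟨i, rfl⟩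
    rw [SetLike.mem_coe, Ideal.mem_torsionOf_iff, smul_eq_mul, ← map_mul,
      Ideal.Quotient.eq_zero_iff_mem]
    exact geom_sum_mul_prod_X_sub_one_mem m i

end MvPolynomial

theorem stmt_4_general (m N : ℕ) (hm : 2 ≤ m)
    (I : Ideal (MvPolynomial (Fin N) ℤ))
    (hI : I = Ideal.span (Set.range fun i : Fin N => X i ^ m - 1))
    (θA : MvPolynomial (Fin N) ℤ ⧸ I)
    (hθ : θA = Ideal.Quotient.mk I (∏ i, (X i - 1)))
    (J : Ideal (MvPolynomial (Fin N) ℤ ⧸ I))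
    (hJ : J = Ideal.span
      (Set.range fun i : Fin N =>
        Ideal.Quotient.mk I (∑ k ∈ Finset.range m, X i ^ k))) :
    ∃ e : ((MvPolynomial (Fin N) ℤ ⧸ I) ⧸ J) ≃ₗ[MvPolynomial (Fin N) ℤ ⧸ I]
        (Ideal.span {θA} : Ideal (MvPolynomial (Fin N) ℤ ⧸ I)),
      ∀ f : MvPolynomial (Fin N) ℤ ⧸ I,
        (e (Ideal.Quotient.mk J f) : MvPolynomial (Fin N) ℤ ⧸ I) = f * θA := by
  subst hI hθ hJ
  have hAnn := torsionOf_mk_prod_X_sub_one (R := ℤ) (n := N) (by omega : m ≠ 0)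
  exact ⟨(Submodule.quotEquivOfEq _ _ hAnn.symm).trans
    (Ideal.quotTorsionOfEquivSpanSingleton _ _ _), fun f => rfl⟩

/-- Let `A = ℤ[x_1,…,x_N]/(x_1^m-1,…,x_N^m-1)`, `θ = (x_1-1)⋯(x_N-1)` and
`φ(t) = t^{m-1}+⋯+t+1`. Multiplication `f ↦ fθ` induces an isomorphism of
`A`-modules from `Ā = A/(φ(x_1),…,φ(x_N))` onto the principal ideal `(θ)` of `A`. -/
theorem stmt_4 (m N : ℕ) (hm : 2 ≤ m) (hN : 1 ≤ N)
    (I : Ideal (MvPolynomial (Fin N) ℤ))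
    (hI : I = Ideal.span (Set.range fun i : Fin N => X i ^ m - 1))
    (θA : MvPolynomial (Fin N) ℤ ⧸ I)
    (hθ : θA = Ideal.Quotient.mk I (∏ i, (X i - 1)))
    (J : Ideal (MvPolynomial (Fin N) ℤ ⧸ I))
    (hJ : J = Ideal.span
      (Set.range fun i : Fin N =>
        Ideal.Quotient.mk I (∑ k ∈ Finset.range m, X i ^ k))) :
    ∃ e : ((MvPolynomial (Fin N) ℤ ⧸ I) ⧸ J) ≃ₗ[MvPolynomial (Fin N) ℤ ⧸ I]
        (Ideal.span {θA} : Ideal (MvPolynomial (Fin N) ℤ ⧸ I)),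
      ∀ f : MvPolynomial (Fin N) ℤ ⧸ I,
        (e (Ideal.Quotient.mk J f) : MvPolynomial (Fin N) ℤ ⧸ I) = f * θA :=
  stmt_4_general m N hm I hI θA hθ J hJ
end

section
/- Let φ: M_1 → M_2 be a homomorphism of finitely generated free Z-modules with dual φ^∨: Hom(M_2,Z) → Hom(M_1,Z). Then there is a canonical isomorphism Tors coker(φ) ≅ Hom_Z(Tors coker(φ^∨), Q/Z). -/
/-!
Put `N = range φ` in Smith normal form: bases `(e_j)` of `M₂` and `(f_i)` of `N` with
`f_i = a_i • e_{σ i}`, all `a_i ≠ 0`. Torsion of a quotient does not change along an injection with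
torsion-free cokernel. The span `S` of the `e_{σ i}` has torsion-free cokernel in `M₂` and contains
`N` with finite index, so `Tors (M₂ ⧸ N) ≅ S ⧸ N ≅ ∏ ℤ/a_i`. Dually, `φ^∨` factors through
`Dual N → Dual M₁`, which is split injective because `N` is free, so
`Tors (coker φ^∨) ≅ coker (Dual M₂ → Dual N)`; in the dual basis of `(f_i)` this is again
`∏ ℤ/a_i`. Finally `∏ ℤ/a_i` is isomorphic to its `ℚ/ℤ`-dual, as the characters of `ℤ/a` are the
multiples of `k ↦ k/a`.
-/

open Module Submodule

section TorsionQuotient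

variable {R V W : Type*} [CommRing R] [AddCommGroup V] [AddCommGroup W] [Module R V] [Module R W]

theorem Module.IsTorsionFree.quotient_range_of_comp_eq_id [IsTorsionFree R W]
    (f : V →ₗ[R] W) (g : W →ₗ[R] V) (hgf : g ∘ₗ f = LinearMap.id) :
    IsTorsionFree R (W ⧸ LinearMap.range f) where
  isSMulRegular r hr := .of_right_eq_zero_of_smul fun q hq ↦ by
    obtain ⟨w, rfl⟩ := mkQ_surjective _ q
    rw [← map_smul] at hq
    rw [mkQ_apply, Quotient.mk_eq_zero] at hq ⊢
    obtain ⟨v, hv⟩ := hq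
    have hw : r • (w - f (g w)) = 0 := by
      rw [smul_sub, ← map_smul, ← map_smul, ← hv, ← LinearMap.comp_apply g f, hgf,
        LinearMap.id_apply, sub_self]
    exact ⟨g w, (sub_eq_zero.mp (hr.smul_eq_zero_iff_right.mp hw)).symm⟩

noncomputable def Submodule.torsionQuotientEquivOfMapEq (f : V →ₗ[R] W)
    (hf : Function.Injective f) [IsTorsionFree R (W ⧸ LinearMap.range f)] (X : Submodule R V)
    (Y : Submodule R W) (hXY : X.map f = Y) :
    torsion R (V ⧸ X) ≃ₗ[R] torsion R (W ⧸ Y) := by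
  subst hXY
  let j := X.mapQ (X.map f) f (le_comap_map f X)
  have hj : Function.Injective j := by
    rw [← LinearMap.ker_eq_bot, ker_mapQ, comap_map_eq_of_injective hf, mkQ_map_self]
  refine .ofBijective (j.restrict fun x hx ↦ ?_) ⟨fun x y h ↦ Subtype.ext (hj congr($h.1)), ?_⟩
  · obtain ⟨a, ha⟩ := (mem_torsion_iff x).mp hx
    rw [Submonoid.smul_def] at ha
    exact (mem_torsion_iff _).mpr ⟨a, by rw [Submonoid.smul_def, ← map_smul, ha, map_zero]⟩
  rintro ⟨q, hq⟩
  obtain ⟨w, rfl⟩ := mkQ_surjective _ q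
  obtain ⟨a, ha⟩ := (mem_torsion_iff _).mp hq
  rw [Submonoid.smul_def, mkQ_apply, ← Quotient.mk_smul, Quotient.mk_eq_zero] at ha
  obtain ⟨v, rfl⟩ : w ∈ LinearMap.range f := by
    have h : (a : R) • (LinearMap.range f).mkQ w = 0 := by
      rw [← map_smul, mkQ_apply, Quotient.mk_eq_zero]
      exact LinearMap.map_le_range ha
    rw [← Quotient.mk_eq_zero, ← mkQ_apply]
    exact (isRegular_iff_mem_nonZeroDivisors.mpr a.2).isSMulRegular.right_eq_zero_of_smul h
  refine ⟨⟨X.mkQ v, (mem_torsion_iff _).mpr ⟨a, ?_⟩⟩, rfl⟩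
  rw [Submonoid.smul_def, mkQ_apply, ← Quotient.mk_smul, Quotient.mk_eq_zero,
    ← comap_map_eq_of_injective hf X, mem_comap, map_smul]
  exact ha

end TorsionQuotient

namespace Module.Basis

variable {ι R M : Type*} [CommRing R] [AddCommGroup M] [Module R M]

theorem isTorsionFree_quotient_span_image [IsDomain R] (b : Basis ι R M) (s : Set ι) :
    IsTorsionFree R (M ⧸ span R (b '' s)) :=
  isTorsionFree_iff_smul_eq_zero.mpr fun r q hrq ↦ by
    obtain ⟨x, rfl⟩ := mkQ_surjective _ q
    rw [← map_smul, mkQ_apply, Quotient.mk_eq_zero, b.mem_span_image, map_smul] at hrq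
    rw [mkQ_apply, Quotient.mk_eq_zero, b.mem_span_image]
    by_cases hr : r = 0
    · exact .inl hr
    · exact .inr (by rwa [Finsupp.support_smul_eq hr] at hrq)

variable [Fintype ι]

theorem map_equivFun_span_smul (b : Basis ι R M) (a : ι → R) :
    (span R (Set.range fun i ↦ a i • b i)).map b.equivFun.toLinearMap =
      pi Set.univ fun i ↦ Ideal.span {a i} := by
  ext x
  simp only [mem_map_equiv, mem_span_range_iff_exists_fun, mem_pi, Set.mem_univ, true_implies,
    Ideal.mem_span_singleton']
  simp_rw [smul_smul, ← b.equivFun_symm_apply, b.equivFun.symm.injective.eq_iff, funext_iff]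
  exact (Classical.skolem (p := fun i c ↦ c * a i = x i)).symm

theorem isTorsionBy_quotient_span_smul (b : Basis ι R M) (a : ι → R) :
    IsTorsionBy R (M ⧸ span R (Set.range fun i ↦ a i • b i)) (∏ i, a i) := by
  intro q
  obtain ⟨x, rfl⟩ := mkQ_surjective _ q
  rw [mkQ_apply, ← Quotient.mk_smul, Quotient.mk_eq_zero]
  suffices h : span R (Set.range b) ≤
      (span R (Set.range fun i ↦ a i • b i)).comap (LinearMap.lsmul R M (∏ i, a i)) from
    h (b.span_eq ▸ mem_top)
  rw [span_le]
  rintro _ ⟨i, rfl⟩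
  obtain ⟨c, hc⟩ := Finset.dvd_prod_of_mem a (Finset.mem_univ i)
  rw [SetLike.mem_coe, mem_comap, LinearMap.lsmul_apply, hc, mul_comm, mul_smul]
  exact smul_mem _ _ (subset_span ⟨i, rfl⟩)

theorem torsion_quotient_span_smul_eq_top [IsDomain R] (b : Basis ι R M) {a : ι → R}
    (ha : ∀ i, a i ≠ 0) : torsion R (M ⧸ span R (Set.range fun i ↦ a i • b i)) = ⊤ :=
  eq_top_iff.mpr fun q _ ↦ (mem_torsion_iff q).mpr
    ⟨⟨_, mem_nonZeroDivisors_of_ne_zero (Finset.prod_ne_zero_iff.mpr fun i _ ↦ ha i)⟩,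
      b.isTorsionBy_quotient_span_smul a (x := q)⟩

noncomputable def quotientSpanSmulEquivPi [DecidableEq ι] (b : Basis ι R M) (a : ι → R) :
    (M ⧸ span R (Set.range fun i ↦ a i • b i)) ≃ₗ[R] Π i, R ⧸ Ideal.span {a i} :=
  (Quotient.equiv _ _ b.equivFun (b.map_equivFun_span_smul a)).trans (quotientPi _)

end Module.Basis

noncomputable def Module.Basis.torsionQuotientSpanSmulEquivPiZMod {ι M : Type*} [Fintype ι]
    [DecidableEq ι] [AddCommGroup M] (b : Basis ι ℤ M) {a : ι → ℤ} (ha : ∀ i, a i ≠ 0) :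
    torsion ℤ (M ⧸ span ℤ (Set.range fun i ↦ a i • b i)) ≃+ Π i, ZMod (a i).natAbs :=
  ((LinearEquiv.ofTop _ (b.torsion_quotient_span_smul_eq_top ha)).trans
    (b.quotientSpanSmulEquivPi a)).toAddEquiv.trans
      (AddEquiv.piCongrRight fun i ↦ (Int.quotientSpanEquivZMod (a i)).toAddEquiv)

namespace Module.Basis.SmithNormalForm

section

variable {ι R M : Type*} [CommRing R] [AddCommGroup M] [Module R M] {N : Submodule R M} {n : ℕ}
  (snf : Basis.SmithNormalForm N ι n)

theorem a_ne_zero [Nontrivial R] (i : Fin n) : snf.a i ≠ 0 := fun h ↦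
  snf.bN.ne_zero i (Subtype.ext (by rw [snf.snf i, h, zero_smul, ZeroMemClass.coe_zero]))

theorem span_range_coe_bN : span R (Set.range fun i ↦ (snf.bN i : M)) = N := by
  have h := congrArg (map N.subtype) snf.bN.span_eq
  rwa [map_span, map_subtype_top, ← Set.range_comp] at h

noncomputable def basisSpan : Basis (Fin n) R (span R (Set.range (snf.bM ∘ snf.f))) :=
  .span (snf.bM.linearIndependent.comp _ snf.f.injective)

theorem map_span_smul_basisSpan :
    (span R (Set.range fun i ↦ snf.a i • snf.basisSpan i)).map
      (span R (Set.range (snf.bM ∘ snf.f))).subtype = N := by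
  rw [map_span, ← Set.range_comp]
  convert snf.span_range_coe_bN using 3
  funext i
  simp [basisSpan, Basis.span_apply, snf.snf i]

theorem isTorsionFree_quotient_span_range [IsDomain R] :
    IsTorsionFree R (M ⧸ span R (Set.range (snf.bM ∘ snf.f))) := by
  rw [Set.range_comp]
  exact snf.bM.isTorsionFree_quotient_span_image _

theorem range_dualMap_subtype :
    LinearMap.range N.subtype.dualMap =
      span R (Set.range fun i ↦ snf.a i • snf.bN.dualBasis i) := by
  apply le_antisymm
  · rintro _ ⟨μ, rfl⟩
    rw [← snf.bN.sum_dual_apply_smul_coord (N.subtype.dualMap μ)]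
    refine sum_mem fun i _ ↦ ?_
    rw [LinearMap.dualMap_apply, subtype_apply, snf.snf i, map_smul, smul_eq_mul, mul_comm,
      ← smul_smul, ← Basis.coe_dualBasis]
    exact smul_mem _ _ (subset_span ⟨i, rfl⟩)
  · rw [span_le]
    rintro _ ⟨i, rfl⟩
    refine ⟨snf.bM.coord (snf.f i), snf.bN.ext fun j ↦ ?_⟩
    simp only [LinearMap.dualMap_apply, subtype_apply, snf.snf j, map_smul, Basis.coord_apply,
      Basis.repr_self, LinearMap.smul_apply, Basis.dualBasis_apply_self, smul_eq_mul]
    obtain rfl | hji := eq_or_ne j i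
    · simp
    · simp [hji]

noncomputable def torsionQuotientEquiv [IsDomain R] :
    torsion R (span R (Set.range (snf.bM ∘ snf.f)) ⧸
      span R (Set.range fun i ↦ snf.a i • snf.basisSpan i)) ≃ₗ[R] torsion R (M ⧸ N) :=
  have : IsTorsionFree R (M ⧸ LinearMap.range (span R (Set.range (snf.bM ∘ snf.f))).subtype) := by
    rw [range_subtype]
    exact snf.isTorsionFree_quotient_span_range
  torsionQuotientEquivOfMapEq _ (subtype_injective _) _ _ snf.map_span_smul_basisSpan

end

variable {ι R M₁ M₂ : Type*} [CommRing R] [AddCommGroup M₁] [Module R M₁] [AddCommGroup M₂]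
  [Module R M₂] {φ : M₁ →ₗ[R] M₂} {n : ℕ}

noncomputable def torsionQuotientDualEquiv (snf : Basis.SmithNormalForm (LinearMap.range φ) ι n) :
    torsion R (Dual R (LinearMap.range φ) ⧸
      span R (Set.range fun i ↦ snf.a i • snf.bN.dualBasis i)) ≃ₗ[R]
      torsion R (Dual R M₁ ⧸ LinearMap.range φ.dualMap) :=
  have : Projective R (LinearMap.range φ) := .of_basis snf.bN
  have : IsTorsionFree R (Dual R M₁ ⧸ LinearMap.range φ.rangeRestrict.dualMap) := by
    obtain ⟨s, hs⟩ := projective_lifting_property _ LinearMap.id φ.surjective_rangeRestrict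
    refine .quotient_range_of_comp_eq_id _ s.dualMap ?_
    rw [LinearMap.dualMap_comp_dualMap, hs, LinearMap.dualMap_id]
  torsionQuotientEquivOfMapEq _
    (LinearMap.dualMap_injective_of_surjective φ.surjective_rangeRestrict) _ _ <| by
      rw [← snf.range_dualMap_subtype, ← LinearMap.range_comp, LinearMap.dualMap_comp_dualMap]
      rfl

end Module.Basis.SmithNormalForm

namespace ZMod

noncomputable def toAddCircleRat (n : ℕ) : ZMod n →+ AddCircle (1 : ℚ) :=
  lift n ⟨zmultiplesHom _ ((n⁻¹ : ℚ) : AddCircle (1 : ℚ)), by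
    obtain rfl | hn := eq_or_ne n 0
    · simp
    · rw [zmultiplesHom_apply, ← AddCircle.coe_zsmul, zsmul_eq_mul, Int.cast_natCast,
        mul_inv_cancel₀ (Nat.cast_ne_zero.mpr hn), AddCircle.coe_period]⟩

theorem toAddCircleRat_intCast (n : ℕ) (k : ℤ) :
    toAddCircleRat n k = ((k / n : ℚ) : AddCircle (1 : ℚ)) := by
  rw [toAddCircleRat, lift_coe, zmultiplesHom_apply, ← AddCircle.coe_zsmul, zsmul_eq_mul,
    div_eq_mul_inv]

theorem toAddCircleRat_injective (n : ℕ) [NeZero n] : Function.Injective (toAddCircleRat n) := by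
  refine (injective_iff_map_eq_zero _).mpr fun x hx ↦ ?_
  obtain ⟨k, rfl⟩ := intCast_surjective x
  rw [toAddCircleRat_intCast, AddCircle.coe_eq_zero_iff] at hx
  obtain ⟨m, hm⟩ := hx
  have hn : (n : ℚ) ≠ 0 := Nat.cast_ne_zero.mpr (NeZero.ne n)
  rw [zsmul_one, eq_div_iff hn] at hm
  rw [intCast_zmod_eq_zero_iff_dvd]
  exact ⟨m, by exact_mod_cast (by linarith : (k : ℚ) = n * m)⟩

theorem addMonoidHom_ext {n : ℕ} {A : Type*} [AddGroup A] {f g : ZMod n →+ A} (h : f 1 = g 1) :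
    f = g := by
  ext x
  obtain ⟨k, rfl⟩ := intCast_surjective x
  rw [← zsmul_one, map_zsmul, map_zsmul, h]

noncomputable def characterEquiv (n : ℕ) [NeZero n] :
    ZMod n ≃+ (ZMod n →+ AddCircle (1 : ℚ)) := by
  refine .ofBijective ((AddMonoidHom.compHom (toAddCircleRat n)).comp AddMonoidHom.mul) ⟨?_, ?_⟩
  · refine (injective_iff_map_eq_zero _).mpr fun x hx ↦ toAddCircleRat_injective n ?_
    simpa using congr($hx 1)
  · intro f
    have hf : n • f 1 = 0 := by rw [← map_nsmul, nsmul_one, natCast_self, map_zero]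
    obtain ⟨m, -, hm⟩ := (AddCircle.nsmul_eq_zero_iff (NeZero.pos n)).mp hf
    refine ⟨m, addMonoidHom_ext ?_⟩
    simpa [← hm] using toAddCircleRat_intCast n m

noncomputable def piCharacterEquiv {ι : Type*} [Fintype ι] [DecidableEq ι] (m : ι → ℕ)
    [∀ i, NeZero (m i)] :
    (Π i, ZMod (m i)) ≃+ ((Π i, ZMod (m i)) →+ AddCircle (1 : ℚ)) :=
  (AddEquiv.piCongrRight fun i ↦ characterEquiv (m i)).trans (Pi.addMonoidHomAddEquiv _ _).symm

end ZMod

theorem stmt_7_general (M₁ M₂ : Type) [AddCommGroup M₁] [AddCommGroup M₂]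
    [Module ℤ M₁] [Module ℤ M₂]
    [Module.Free ℤ M₂] [Module.Finite ℤ M₂]
    (φ : M₁ →ₗ[ℤ] M₂) :
    Nonempty
      ((Submodule.torsion ℤ (M₂ ⧸ LinearMap.range φ)) ≃+
        ((Submodule.torsion ℤ
            (Module.Dual ℤ M₁ ⧸ LinearMap.range (Module.Dual.transpose φ))) →+
          AddCircle (1 : ℚ))) := by
  -- `a • x` with `a : ℤ` elaborates to `zsmul`, so work with the canonical `ℤ`-module on `M₂`
  obtain rfl := AddCommGroup.uniqueIntModule.uniq ‹Module ℤ M₂›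
  obtain ⟨n, snf⟩ := (LinearMap.range φ).smithNormalForm (Free.chooseBasis ℤ M₂)
  have ha := snf.a_ne_zero
  have (i : Fin n) : NeZero (snf.a i).natAbs := ⟨Int.natAbs_ne_zero.mpr (ha i)⟩
  let G := Π i, ZMod (snf.a i).natAbs
  let eCoker : torsion ℤ (M₂ ⧸ LinearMap.range φ) ≃+ G :=
    snf.torsionQuotientEquiv.toAddEquiv.symm.trans
      (snf.basisSpan.torsionQuotientSpanSmulEquivPiZMod ha)
  let eDual : torsion ℤ (Dual ℤ M₁ ⧸ LinearMap.range φ.dualMap) ≃+ G :=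
    snf.torsionQuotientDualEquiv.toAddEquiv.symm.trans
      (snf.bN.dualBasis.torsionQuotientSpanSmulEquivPiZMod ha)
  exact ⟨eCoker.trans ((ZMod.piCharacterEquiv _).trans (AddEquiv.addMonoidHomCongrLeft eDual.symm))⟩

/-- Let `φ : M₁ → M₂` be a homomorphism of finitely generated free `ℤ`-modules with dual
`φ^∨ : Hom(M₂,ℤ) → Hom(M₁,ℤ)`. Then `Tors coker(φ) ≅ Hom_ℤ(Tors coker(φ^∨), ℚ/ℤ)`. -/
theorem stmt_7 (M₁ M₂ : Type) [AddCommGroup M₁] [AddCommGroup M₂]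
    [Module ℤ M₁] [Module ℤ M₂]
    [Module.Free ℤ M₁] [Module.Finite ℤ M₁]
    [Module.Free ℤ M₂] [Module.Finite ℤ M₂]
    (φ : M₁ →ₗ[ℤ] M₂) :
    Nonempty
      ((Submodule.torsion ℤ (M₂ ⧸ LinearMap.range φ)) ≃+
        ((Submodule.torsion ℤ
            (Module.Dual ℤ M₁ ⧸ LinearMap.range (Module.Dual.transpose φ))) →+
          AddCircle (1 : ℚ))) :=
  stmt_7_general M₁ M₂ φ
end
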